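/- The function g(α) = 1 + 2^{2α−1} − 3^α is nonnegative for α ≥ 2 and nonpositive for 1 ≤ α ≤ 2, with g(1) = g(2) = 0. -/

import Mathlib

/-!
Dividing by `3 ^ α` turns `g(α) = 1 + 2 ^ (2α - 1) - 3 ^ α` into
`(1/3) ^ α + (4/3) ^ α / 2 - 1`, a sum of exponentials and hence convex, and it vanishes at
`α = 1` and `α = 2`. A convex function is nonpositive between two of its zeros and nonnegative
beyond them.
-/

open Real Set

section ConvexZeros

variable {𝕜 : Type*} [Field 𝕜] [LinearOrder 𝕜] [IsStrictOrderedRing 𝕜] {s : Set 𝕜}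
  {f : 𝕜 → 𝕜} {x y z : 𝕜}

theorem ConvexOn.nonpos_of_mem_Icc_of_eq_zero (hf : ConvexOn 𝕜 s f) (hx : x ∈ s) (hy : y ∈ s)
    (hfx : f x = 0) (hfy : f y = 0) (hz : z ∈ Icc x y) : f z ≤ 0 := by
  have hxy : x ≤ y := hz.1.trans hz.2
  simpa [hfx, hfy] using hf.le_on_segment hx hy (segment_eq_Icc hxy ▸ hz)

theorem ConvexOn.nonneg_of_eq_zero_of_lt_of_le (hf : ConvexOn 𝕜 s f) (hx : x ∈ s) (hz : z ∈ s)
    (hfx : f x = 0) (hfy : f y = 0) (hxy : x < y) (hyz : y ≤ z) : 0 ≤ f z := by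
  rcases hyz.eq_or_lt with rfl | hyz
  · exact hfy.ge
  · have hslope := hf.slope_mono_adjacent hx hz hxy hyz
    rw [hfx, hfy, sub_zero, zero_div, sub_zero] at hslope
    simpa using (le_div_iff₀ (sub_pos.mpr hyz)).mp hslope

end ConvexZeros

theorem convexOn_one_third_rpow_add_four_thirds_rpow_div_two :
    ConvexOn ℝ univ fun α : ℝ ↦ (1 / 3 : ℝ) ^ α + (4 / 3 : ℝ) ^ α / 2 - 1 := by
  refine (((convexOn_rpow_left (by norm_num : (0 : ℝ) < 1 / 3)).add
    ((convexOn_rpow_left (by norm_num : (0 : ℝ) < 4 / 3)).smul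
      (by norm_num : (0 : ℝ) ≤ 1 / 2))).add_const (-1)).congr fun α _ ↦ ?_
  simp only [Pi.add_apply, smul_eq_mul]
  ring

theorem one_add_two_rpow_sub_three_rpow_eq (α : ℝ) :
    1 + (2 : ℝ) ^ (2 * α - 1) - (3 : ℝ) ^ α =
      (3 : ℝ) ^ α * ((1 / 3 : ℝ) ^ α + (4 / 3 : ℝ) ^ α / 2 - 1) := by
  have h_third : (3 : ℝ) ^ α * (1 / 3 : ℝ) ^ α = 1 := by
    rw [← mul_rpow (by norm_num) (by norm_num)]; norm_num
  have h_four_thirds : (3 : ℝ) ^ α * (4 / 3 : ℝ) ^ α = (2 : ℝ) ^ (2 * α) := by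
    rw [← mul_rpow (by norm_num) (by norm_num), rpow_mul (by norm_num)]; norm_num
  rw [rpow_sub (by norm_num), rpow_one]
  linear_combination -h_third - h_four_thirds / 2

theorem g_sign :
    (∀ α : ℝ, 2 ≤ α → 0 ≤ 1 + (2 : ℝ) ^ (2 * α - 1) - (3 : ℝ) ^ α) ∧
    (∀ α : ℝ, 1 ≤ α → α ≤ 2 → 1 + (2 : ℝ) ^ (2 * α - 1) - (3 : ℝ) ^ α ≤ 0) ∧
    1 + (2 : ℝ) ^ (2 * (1 : ℝ) - 1) - (3 : ℝ) ^ (1 : ℝ) = 0 ∧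
    1 + (2 : ℝ) ^ (2 * (2 : ℝ) - 1) - (3 : ℝ) ^ (2 : ℝ) = 0 := by
  have hconv := convexOn_one_third_rpow_add_four_thirds_rpow_div_two
  have h₁ : (1 / 3 : ℝ) ^ (1 : ℝ) + (4 / 3 : ℝ) ^ (1 : ℝ) / 2 - 1 = 0 := by norm_num
  have h₂ : (1 / 3 : ℝ) ^ (2 : ℝ) + (4 / 3 : ℝ) ^ (2 : ℝ) / 2 - 1 = 0 := by norm_num
  refine ⟨fun α hα ↦ ?_, fun α hα₁ hα₂ ↦ ?_, by norm_num, by norm_num⟩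
  · rw [one_add_two_rpow_sub_three_rpow_eq]
    refine mul_nonneg (by positivity) ?_
    exact hconv.nonneg_of_eq_zero_of_lt_of_le (mem_univ 1) (mem_univ α) h₁ h₂ one_lt_two hα
  · rw [one_add_two_rpow_sub_three_rpow_eq]
    refine mul_nonpos_of_nonneg_of_nonpos (by positivity) ?_
    exact hconv.nonpos_of_mem_Icc_of_eq_zero (mem_univ 1) (mem_univ 2) h₁ h₂ ⟨hα₁, hα₂⟩
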